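/- arXiv:2505.18295 — 2 statements merged into one kernel-verified Lean document; each statement's English description precedes it below -/
import Mathlib

section
/- Let b_n = |s^{-1}(Av_n(132,312))| be the number of permutations p of length n such that s(p) avoids both 132 and 312, with b_0 = 0. Then b_1 = 1 and, for every n ≥ 2, b_n = 2·b_{n-1} + 2·∑_{i=2}^{n-1} b_{i-1}·b_{n-i}. -/
/-- The stack-sorting map `s`, implemented with a fuel parameter (the fuel
`l.length` always suffices, since the maximum of a nonempty list of naturals is
attained, so both recursive calls are on strictly shorter lists).
`s(ε) = ε` and `s(LmR) = s(L) s(R) m` where `m` is the maximum entry. -/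
def stackSortAux : ℕ → List ℕ → List ℕ
  | 0, _ => []
  | _ + 1, [] => []
  | fuel + 1, a :: t =>
      let m := (a :: t).foldr max 0
      stackSortAux fuel ((a :: t).takeWhile (fun x => x ≠ m)) ++
        stackSortAux fuel (((a :: t).dropWhile (fun x => x ≠ m)).tail) ++ [m]

/-- The stack-sorting map on finite sequences of (distinct) naturals. -/
def stackSort (l : List ℕ) : List ℕ := stackSortAux l.length l

/-- `l` is a permutation of `{1, 2, …, n}`, written in one-line notation. -/
def IsPermList (n : ℕ) (l : List ℕ) : Prop :=
  l.Perm ((List.range n).map (· + 1))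

/-- The sequence `p` contains the pattern `q`: there is a strictly increasing choice
of positions of `p` on which the entries compare exactly as the entries of `q` do. -/
def ContainsPat (p q : List ℕ) : Prop :=
  ∃ f : Fin q.length → Fin p.length, StrictMono f ∧
    ∀ i j : Fin q.length, q.get i < q.get j ↔ p.get (f i) < p.get (f j)

/-- The sequence `p` avoids the pattern `q`. -/
def AvoidsPat (p q : List ℕ) : Prop := ¬ ContainsPat p q

/-- `b n = |s⁻¹(Av_n(132, 312))|`: the number of permutations `p` of length `n`
whose stack-sorted image avoids both `132` and `312`, with `b 0 = 0` by convention. -/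
noncomputable def b (n : ℕ) : ℕ :=
  if n = 0 then 0 else
    Nat.card {p : List ℕ // IsPermList n p ∧
      AvoidsPat (stackSort p) [1, 3, 2] ∧ AvoidsPat (stackSort p) [3, 1, 2]}

/-!
Write `p = L n R` with `n` the maximal entry, so that `s(p) = s(L) s(R) n`. A sequence avoids
`132` and `312` exactly when each of its entries is a left-to-right maximum or minimum, and
appending the maximum `n` does not affect this. If `L` or `R` is empty, what remains is a
preimage of length `n - 1`. Otherwise, with `|L| = i - 1`, no entry of `R` may lie between two
entries of `L`, so the values of `L` form an interval `(a, a + i - 1]`; then `s(L) s(R)` has the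
property iff `s(L)` has it and, in `s(R)`, the entries `≤ a` decrease while those `> a` increase.
Standardizing `L` and `R` gives a preimage of length `i - 1` and a permutation of length `n - i`
whose image diverges from the threshold `a` in this way. A sequence of left-to-right extrema with
first entry `h` diverges from exactly two thresholds, `h - 1` and `h`, which gives the factor
`2 b_{n-i}`.
-/

open List

/-! ### The stack-sorting map -/

lemma foldr_max_mem {l : List ℕ} (h : l ≠ []) : l.foldr max 0 ∈ l :=
  maximum_mem (foldr_max_of_ne_nil h).symm

lemma foldr_max_eq {l : List ℕ} {x : ℕ} (hx : x ∈ l) (h : ∀ y ∈ l, y ≤ x) :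
    l.foldr max 0 = x :=
  le_antisymm (max_le_of_forall_le l x h) (le_max_of_le hx le_rfl)

lemma eq_takeWhile_append_cons {l : List ℕ} {m : ℕ} (hm : m ∈ l) :
    l = l.takeWhile (· ≠ m) ++ m :: (l.dropWhile (· ≠ m)).tail := by
  have hne : l.dropWhile (· ≠ m) ≠ [] := by
    intro h
    simpa using dropWhile_eq_nil_iff.1 h m hm
  have hhead : (l.dropWhile (· ≠ m)).head hne = m := by
    simpa using head_dropWhile_not (· ≠ m) hne
  conv_lhs => rw [← takeWhile_append_dropWhile (p := (· ≠ m)) (l := l), ← cons_head_tail hne, hhead]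

lemma takeWhile_append_cons {L R : List ℕ} {x : ℕ} (hx : x ∉ L) :
    (L ++ x :: R).takeWhile (· ≠ x) = L := by
  rw [takeWhile_append_of_pos (by intro a ha; simpa using ne_of_mem_of_not_mem ha hx)]
  simp

lemma dropWhile_append_cons {L R : List ℕ} {x : ℕ} (hx : x ∉ L) :
    (L ++ x :: R).dropWhile (· ≠ x) = x :: R := by
  rw [dropWhile_append_of_pos (by intro a ha; simpa using ne_of_mem_of_not_mem ha hx)]
  simp

@[simp]
lemma stackSort_nil : stackSort [] = [] := rfl

lemma stackSortAux_eq_stackSort (fuel : ℕ) (l : List ℕ) (h : l.length ≤ fuel) :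
    stackSortAux fuel l = stackSort l := by
  induction fuel using Nat.strong_induction_on generalizing l with
  | _ fuel ih =>
    match fuel, l with
    | 0, [] => rfl
    | f + 1, [] => rfl
    | f + 1, a :: t =>
      have hlen := congrArg length (eq_takeWhile_append_cons (foldr_max_mem (cons_ne_nil a t)))
      simp only [length_append, length_cons] at hlen h
      show _ = stackSortAux (t.length + 1) (a :: t)
      simp only [stackSortAux]
      rw [ih f (by omega) _ (by omega), ih f (by omega) _ (by omega),
        ih t.length (by omega) _ (by omega), ih t.length (by omega) _ (by omega)]

lemma stackSort_append_cons {L R : List ℕ} {x : ℕ} (hx : x ∉ L)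
    (hmax : ∀ y ∈ L ++ x :: R, y ≤ x) :
    stackSort (L ++ x :: R) = stackSort L ++ stackSort R ++ [x] := by
  obtain ⟨a, t, hat⟩ := exists_cons_of_ne_nil (append_ne_nil_of_right_ne_nil L (cons_ne_nil x R))
  have hm : (a :: t).foldr max 0 = x := hat ▸ foldr_max_eq (by simp) hmax
  have hlen := congrArg length hat
  simp only [length_append, length_cons] at hlen
  rw [hat, stackSort, length_cons, stackSortAux, hm, ← hat, takeWhile_append_cons hx,
    dropWhile_append_cons hx, tail_cons, stackSortAux_eq_stackSort _ _ (by omega),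
    stackSortAux_eq_stackSort _ _ (by omega)]

lemma stackSort_induction {P : List ℕ → Prop} (nil : P [])
    (split : ∀ L x R, x ∉ L → (∀ y ∈ L ++ x :: R, y ≤ x) → P L → P R → P (L ++ x :: R))
    (l : List ℕ) : P l := by
  induction hn : l.length using Nat.strong_induction_on generalizing l with
  | _ n ih =>
    rcases eq_or_ne l [] with rfl | hl
    · exact nil
    have hsplit := eq_takeWhile_append_cons (foldr_max_mem hl)
    have hlen := congrArg length hsplit
    simp only [length_append, length_cons] at hlen
    rw [hsplit]
    refine split _ _ _ (fun h => by simpa using mem_takeWhile_imp h) ?_ (ih _ (by omega) _ rfl)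
      (ih _ (by omega) _ rfl)
    rw [← hsplit]
    exact fun y hy => le_max_of_le hy le_rfl

lemma stackSort_perm (l : List ℕ) : stackSort l ~ l := by
  induction l using stackSort_induction with
  | nil => rfl
  | split L x R hx hmax hL hR =>
    rw [stackSort_append_cons hx hmax, append_assoc]
    exact hL.append ((hR.append_right [x]).trans (perm_append_singleton x R))

lemma stackSort_map {φ : ℕ → ℕ} (hφ : StrictMono φ) (l : List ℕ) :
    stackSort (l.map φ) = (stackSort l).map φ := by
  induction l using stackSort_induction with
  | nil => rfl
  | split L x R hx hmax hL hR =>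
    have hx' : φ x ∉ L.map φ := by simpa [hφ.injective.eq_iff] using hx
    have hmax' : ∀ y ∈ L.map φ ++ φ x :: R.map φ, y ≤ φ x := by
      rw [← map_cons, ← map_append]
      exact forall_mem_map.2 fun y hy => hφ.monotone (hmax y hy)
    rw [map_append, map_cons, stackSort_append_cons hx hmax, stackSort_append_cons hx' hmax', hL,
      hR]
    simp

/-! ### Sequences of left-to-right extrema -/

def DivergesAt (a : ℕ) (w : List ℕ) : Prop :=
  w.Pairwise fun x y => (x ≤ a → y ≤ a → y ≤ x) ∧ (a < x → a < y → x ≤ y)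

/-- For a sequence without repetitions: every entry is a left-to-right maximum or minimum
(`isRecordSeq_iff_avoids`). -/
def IsRecordSeq (w : List ℕ) : Prop := DivergesAt (w.headD 0) w

instance (a : ℕ) (w : List ℕ) : Decidable (DivergesAt a w) := by
  unfold DivergesAt; infer_instance

instance (w : List ℕ) : Decidable (IsRecordSeq w) := by
  unfold IsRecordSeq; infer_instance

lemma divergesAt_append {a : ℕ} {u v : List ℕ} :
    DivergesAt a (u ++ v) ↔ DivergesAt a u ∧ DivergesAt a v ∧
      ∀ x ∈ u, ∀ y ∈ v, (x ≤ a → y ≤ a → y ≤ x) ∧ (a < x → a < y → x ≤ y) :=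
  pairwise_append

lemma divergesAt_congr {a b : ℕ} {w : List ℕ} (h : ∀ y ∈ w, y ≤ a ↔ y ≤ b) :
    DivergesAt a w ↔ DivergesAt b w :=
  Pairwise.iff_of_mem fun hx hy => by simp only [← not_le, h _ hx, h _ hy]

lemma divergesAt_map_iff {φ : ℕ → ℕ} (hφ : StrictMono φ) {a b : ℕ} (h : ∀ x, φ x ≤ b ↔ x ≤ a)
    {w : List ℕ} : DivergesAt b (w.map φ) ↔ DivergesAt a w := by
  simp only [DivergesAt, pairwise_map, ← not_le, h, hφ.le_iff_le]

lemma isRecordSeq_map_iff {φ : ℕ → ℕ} (hφ : StrictMono φ) {w : List ℕ} :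
    IsRecordSeq (w.map φ) ↔ IsRecordSeq w := by
  cases w with
  | nil => rfl
  | cons h t => exact divergesAt_map_iff hφ fun x => hφ.le_iff_le

lemma isRecordSeq_append_singleton {u : List ℕ} {c : ℕ} (hc : ∀ x ∈ u, x < c) :
    IsRecordSeq (u ++ [c]) ↔ IsRecordSeq u := by
  cases u with
  | nil => simp [IsRecordSeq, DivergesAt]
  | cons h t =>
    have hh := hc h mem_cons_self
    show DivergesAt h (h :: t ++ [c]) ↔ DivergesAt h (h :: t)
    rw [divergesAt_append]
    simp only [DivergesAt, pairwise_singleton, mem_singleton, forall_eq, true_and,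
      and_iff_left_iff_imp]
    exact fun _ x hx => ⟨by omega, fun _ _ => (hc x hx).le⟩

lemma isRecordSeq_append_iff {u v : List ℕ} {a c : ℕ} (hu : u ≠ [])
    (hu' : ∀ x ∈ u, a < x ∧ x ≤ c) (hv : ∀ y ∈ v, y ≤ a ∨ c < y) :
    IsRecordSeq (u ++ v) ↔ IsRecordSeq u ∧ DivergesAt a v := by
  obtain ⟨h, t, rfl⟩ := exists_cons_of_ne_nil hu
  have hh := hu' h mem_cons_self
  show DivergesAt h (h :: t ++ v) ↔ DivergesAt h (h :: t) ∧ DivergesAt a v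
  rw [divergesAt_append, divergesAt_congr (w := v) (b := a) fun y hy => by have := hv y hy; omega]
  have cross : ∀ x ∈ h :: t, ∀ y ∈ v, (x ≤ h → y ≤ h → y ≤ x) ∧ (h < x → h < y → x ≤ y) :=
    fun x hx y hy => by have := hu' x hx; have := hv y hy; omega
  exact ⟨fun H => ⟨H.1, H.2.1⟩, fun H => ⟨H.1, H.2, cross⟩⟩

lemma not_lt_lt_of_isRecordSeq_append {u v : List ℕ} (hr : IsRecordSeq (u ++ v)) {x x' y : ℕ}
    (hx : x ∈ u) (hx' : x' ∈ u) (hy : y ∈ v) : ¬ (x < y ∧ y < x') := by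
  cases u with
  | nil => simp at hx
  | cons h t =>
    have cross := (divergesAt_append.1 hr).2.2
    have := cross x hx y hy
    have := cross x' hx' y hy
    omega

lemma containsPat_132_iff {w : List ℕ} : ContainsPat w [1, 3, 2] ↔
    ∃ i j k, ∃ (_ : i < j) (_ : j < k) (_ : k < w.length), w[i] < w[k] ∧ w[k] < w[j] := by
  constructor
  · rintro ⟨f, hf, hord⟩
    exact ⟨f 0, f 1, f 2, hf (by decide), hf (by decide), (f 2).isLt,
      by simpa using (hord 0 2).1 (by decide), by simpa using (hord 2 1).1 (by decide)⟩
  · rintro ⟨i, j, k, hij, hjk, hk, h1, h2⟩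
    refine ⟨![⟨i, by omega⟩, ⟨j, by omega⟩, ⟨k, hk⟩], fun a b hab => ?_, fun a b => ?_⟩ <;>
      fin_cases a <;> fin_cases b <;> simp_all [Fin.lt_def] <;> omega

lemma containsPat_312_iff {w : List ℕ} : ContainsPat w [3, 1, 2] ↔
    ∃ i j k, ∃ (_ : i < j) (_ : j < k) (_ : k < w.length), w[j] < w[k] ∧ w[k] < w[i] := by
  constructor
  · rintro ⟨f, hf, hord⟩
    exact ⟨f 0, f 1, f 2, hf (by decide), hf (by decide), (f 2).isLt,
      by simpa using (hord 1 2).1 (by decide), by simpa using (hord 2 0).1 (by decide)⟩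
  · rintro ⟨i, j, k, hij, hjk, hk, h1, h2⟩
    refine ⟨![⟨i, by omega⟩, ⟨j, by omega⟩, ⟨k, hk⟩], fun a b hab => ?_, fun a b => ?_⟩ <;>
      fin_cases a <;> fin_cases b <;> simp_all [Fin.lt_def] <;> omega

lemma isRecordSeq_iff_avoids {w : List ℕ} (hw : w.Nodup) :
    IsRecordSeq w ↔ AvoidsPat w [1, 3, 2] ∧ AvoidsPat w [3, 1, 2] := by
  rcases w with _ | ⟨h, t⟩
  · simp [IsRecordSeq, DivergesAt, AvoidsPat, containsPat_132_iff, containsPat_312_iff]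
  have h0 : (h :: t)[0] = h := rfl
  simp only [IsRecordSeq, DivergesAt, headD_cons, pairwise_iff_getElem, AvoidsPat,
    containsPat_132_iff, containsPat_312_iff, ← not_or]
  -- the last entry of a `132` or `312` breaks divergence with one of the two entries before it;
  -- conversely, a pair breaking divergence forms one of these patterns with the first entry
  constructor
  · rintro hd (⟨i, j, k, hij, hjk, hk, h1, h2⟩ | ⟨i, j, k, hij, hjk, hk, h1, h2⟩) <;>
    · have := hd i k (by omega) hk (by omega)
      have := hd j k (by omega) hk (by omega)
      omega
  · intro hav i j hi hj hij
    by_contra hc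
    have hj0 : (h :: t)[j] ≠ h := fun he => by
      have := (hw.getElem_inj_iff (i := j) (j := 0)).1 (he.trans h0.symm); omega
    rcases not_and_or.1 hc with hc | hc
    · exact hav (Or.inr ⟨0, i, j, by grind, hij, hj, by omega, by omega⟩)
    · exact hav (Or.inl ⟨0, i, j, by grind, hij, hj, by omega, by omega⟩)

lemma divergesAt_cons_iff_isRecordSeq {h a : ℕ} {t : List ℕ} (hh : h ∉ t) (ha : a + 1 = h ∨ a = h) :
    DivergesAt a (h :: t) ↔ IsRecordSeq (h :: t) := by
  have key : ∀ y ∈ t, y ≤ a ↔ y ≤ h := fun y hy => by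
    have := ne_of_mem_of_not_mem hy hh; omega
  simp only [IsRecordSeq, headD_cons, DivergesAt, pairwise_cons]
  refine and_congr (forall₂_congr fun y hy => ?_) (divergesAt_congr key)
  have := ne_of_mem_of_not_mem hy hh
  omega

lemma eq_head_of_divergesAt {h a m : ℕ} {t : List ℕ} (hmem : ∀ x, x ∈ h :: t ↔ 1 ≤ x ∧ x < 1 + m)
    (ham : a ≤ m) (hd : DivergesAt a (h :: t)) : a + 1 = h ∨ a = h := by
  have hh := (hmem h).1 mem_cons_self
  rw [DivergesAt, pairwise_cons] at hd
  by_contra hne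
  rcases Nat.lt_or_gt_of_ne (show a + 1 ≠ h by omega) with hlt | hgt
  · -- the entries `h > h - 1` both exceed `a` but decrease
    have := (hd.1 (h - 1) (mem_of_ne_of_mem (by omega) ((hmem _).2 (by omega)))).2
    omega
  · -- the entries `h < a` are both at most `a` but increase
    have := (hd.1 a (mem_of_ne_of_mem (by omega) ((hmem _).2 (by omega)))).1
    omega

lemma card_filter_divergesAt {w : List ℕ} {m : ℕ} (hw : w ~ range' 1 m) (hm : 1 ≤ m) :
    ((Finset.range (m + 1)).filter (DivergesAt · w)).card = if IsRecordSeq w then 2 else 0 := by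
  have hne : w ≠ [] := by
    rintro rfl
    have := hw.length_eq
    simp only [length_nil, length_range'] at this
    omega
  obtain ⟨h, t, rfl⟩ := exists_cons_of_ne_nil hne
  have hmem : ∀ x, x ∈ h :: t ↔ 1 ≤ x ∧ x < 1 + m := fun x => by rw [hw.mem_iff, mem_range'_1]
  have hh := (hmem h).1 mem_cons_self
  have hnd := (nodup_cons.1 (hw.nodup_iff.2 nodup_range'))
  split_ifs with hr
  · rw [← Finset.card_pair (show h - 1 ≠ h by omega)]
    congr 1
    ext a
    simp only [Finset.mem_filter, Finset.mem_range, Finset.mem_insert, Finset.mem_singleton]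
    constructor
    · rintro ⟨ham, hd⟩
      have := eq_head_of_divergesAt hmem (by omega) hd
      omega
    · intro ha
      exact ⟨by omega, (divergesAt_cons_iff_isRecordSeq hnd.1 (by omega)).2 hr⟩
  · rw [Finset.card_eq_zero, Finset.filter_eq_empty_iff]
    intro a ha hd
    rw [Finset.mem_range] at ha
    exact hr ((divergesAt_cons_iff_isRecordSeq hnd.1
      (eq_head_of_divergesAt hmem (by omega) hd)).1 hd)

/-! ### Counting preimages -/

lemma map_add_one_range (n : ℕ) : (range n).map (· + 1) = range' 1 n := by
  rw [range'_eq_map_range]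
  simp only [Nat.add_comm]

def perms (n : ℕ) : Finset (List ℕ) := (range' 1 n).permutations.toFinset

lemma mem_perms {n : ℕ} {p : List ℕ} : p ∈ perms n ↔ p ~ range' 1 n := by
  simp [perms]

/-- The stack-sorting preimage of `Av_n(132, 312)`. -/
def recordPreimages (n : ℕ) : Finset (List ℕ) :=
  (perms n).filter fun p => IsRecordSeq (stackSort p)

def divergingPreimages (m a : ℕ) : Finset (List ℕ) :=
  (perms m).filter fun p => DivergesAt a (stackSort p)

lemma mem_recordPreimages {n : ℕ} {p : List ℕ} :
    p ∈ recordPreimages n ↔ p ~ range' 1 n ∧ IsRecordSeq (stackSort p) := by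
  rw [recordPreimages, Finset.mem_filter, mem_perms]

lemma mem_divergingPreimages {m a : ℕ} {p : List ℕ} :
    p ∈ divergingPreimages m a ↔ p ~ range' 1 m ∧ DivergesAt a (stackSort p) := by
  rw [divergingPreimages, Finset.mem_filter, mem_perms]

lemma b_eq_card {n : ℕ} (hn : n ≠ 0) : b n = (recordPreimages n).card := by
  have hmem : ∀ p, IsPermList n p ∧ AvoidsPat (stackSort p) [1, 3, 2] ∧
      AvoidsPat (stackSort p) [3, 1, 2] ↔ p ∈ recordPreimages n := fun p => by
    rw [mem_recordPreimages, IsPermList, map_add_one_range]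
    refine and_congr_right fun hp => (isRecordSeq_iff_avoids ?_).symm
    exact ((stackSort_perm p).trans hp).nodup_iff.2 nodup_range'
  rw [b, if_neg hn, Nat.card_congr (Equiv.subtypeEquivRight hmem), Nat.card_eq_finsetCard]

lemma card_recordPreimages_one : (recordPreimages 1).card = 1 := by
  rw [Finset.card_eq_one]
  refine ⟨[1], Finset.ext fun p => ?_⟩
  rw [mem_recordPreimages, Finset.mem_singleton, range'_one, perm_singleton]
  exact ⟨And.left, fun hp => ⟨hp, hp ▸ by decide⟩⟩

lemma sum_card_divergingPreimages {m : ℕ} (hm : 1 ≤ m) :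
    ∑ a ∈ Finset.range (m + 1), (divergingPreimages m a).card = 2 * (recordPreimages m).card := by
  simp only [divergingPreimages, recordPreimages, Finset.card_filter]
  rw [Finset.sum_comm]
  calc ∑ p ∈ perms m, ∑ a ∈ Finset.range (m + 1), (if DivergesAt a (stackSort p) then 1 else 0)
      = ∑ p ∈ perms m, if IsRecordSeq (stackSort p) then 2 else 0 := by
        refine Finset.sum_congr rfl fun p hp => ?_
        rw [← Finset.card_filter]
        exact card_filter_divergesAt ((stackSort_perm p).trans (mem_perms.1 hp)) hm
    _ = 2 * ∑ p ∈ perms m, if IsRecordSeq (stackSort p) then 1 else 0 := by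
        rw [Finset.mul_sum]
        exact Finset.sum_congr rfl fun p _ => by split_ifs <;> rfl

lemma join_mem_recordPreimages_iff {N : ℕ} {L R : List ℕ} :
    L ++ (N + 1) :: R ∈ recordPreimages (N + 1) ↔
      L ++ R ~ range' 1 N ∧ IsRecordSeq (stackSort L ++ stackSort R) := by
  have hperm : L ++ (N + 1) :: R ~ range' 1 (N + 1) ↔ L ++ R ~ range' 1 N := by
    rw [perm_middle.congr_left, range'_concat, (perm_append_singleton _ _).congr_right,
      Nat.one_mul, Nat.add_comm 1 N, perm_cons]
  rw [mem_recordPreimages, hperm]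
  refine and_congr_right fun h => ?_
  have hlt : ∀ y ∈ L ++ R, y < N + 1 := fun y hy => by
    have := mem_range'_1.1 (h.mem_iff.1 hy); omega
  have hmax : ∀ y ∈ L ++ (N + 1) :: R, y ≤ N + 1 := fun y hy => by
    rcases mem_cons.1 (perm_middle.mem_iff.1 hy) with rfl | hy
    · exact le_rfl
    · exact (hlt y hy).le
  rw [stackSort_append_cons (fun hN => (hlt _ (mem_append_left R hN)).false) hmax,
    isRecordSeq_append_singleton fun y hy =>
      hlt y (((stackSort_perm L).append (stackSort_perm R)).mem_iff.1 hy)]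

lemma mem_filter_idxOf_iff {N k : ℕ} {p : List ℕ} :
    p ∈ (recordPreimages (N + 1)).filter (·.idxOf (N + 1) = k) ↔
      ∃ L R, L.length = k ∧ p = L ++ (N + 1) :: R ∧ L ++ R ~ range' 1 N ∧
        IsRecordSeq (stackSort L ++ stackSort R) := by
  rw [Finset.mem_filter]
  constructor
  · rintro ⟨hp, rfl⟩
    have hsplit := eq_takeWhile_append_cons (m := N + 1)
      ((mem_recordPreimages.1 hp).1.mem_iff.2 (mem_range'_1.2 (by omega)))
    have hnot : N + 1 ∉ p.takeWhile (· ≠ N + 1) := fun h => by simpa using mem_takeWhile_imp h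
    refine ⟨_, _, ?_, hsplit, join_mem_recordPreimages_iff.1 (hsplit ▸ hp)⟩
    conv_rhs => rw [hsplit, idxOf_append_of_notMem hnot, idxOf_cons_self, Nat.add_zero]
  · rintro ⟨L, R, rfl, rfl, h⟩
    have hnot : N + 1 ∉ L := fun hN => by
      have := mem_range'_1.1 (h.1.mem_iff.1 (mem_append_left R hN)); omega
    exact ⟨join_mem_recordPreimages_iff.2 h,
      by rw [idxOf_append_of_notMem hnot, idxOf_cons_self, Nat.add_zero]⟩

lemma card_filter_idxOf_eq_zero (N : ℕ) :
    ((recordPreimages (N + 1)).filter (·.idxOf (N + 1) = 0)).card = (recordPreimages N).card := by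
  rw [← Finset.card_image_of_injective (recordPreimages N) (cons_injective (a := N + 1))]
  congr 1
  ext p
  rw [mem_filter_idxOf_iff, Finset.mem_image]
  constructor
  · rintro ⟨L, R, hL, rfl, h⟩
    rw [length_eq_zero_iff] at hL
    subst hL
    exact ⟨R, mem_recordPreimages.2 h, rfl⟩
  · rintro ⟨R, hR, rfl⟩
    exact ⟨[], R, rfl, rfl, mem_recordPreimages.1 hR⟩

lemma card_filter_idxOf_eq_last (N : ℕ) :
    ((recordPreimages (N + 1)).filter (·.idxOf (N + 1) = N)).card = (recordPreimages N).card := by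
  rw [← Finset.card_image_of_injective (recordPreimages N) (append_left_injective [N + 1])]
  congr 1
  ext p
  rw [mem_filter_idxOf_iff, Finset.mem_image]
  constructor
  · rintro ⟨L, R, hL, rfl, h⟩
    have hR : R = [] := by
      have := h.1.length_eq
      rw [length_append, length_range', hL] at this
      exact length_eq_zero_iff.1 (by omega)
    subst hR
    exact ⟨L, mem_recordPreimages.2 (by simpa using h), rfl⟩
  · rintro ⟨L, hL, rfl⟩
    have hL := mem_recordPreimages.1 hL
    exact ⟨L, [], by simp [hL.1.length_eq], rfl, by simpa using hL⟩

/-! ### Both blocks nonempty -/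

lemma List.Perm.map_of_leftInverse {α β : Type*} {f : α → β} {g : β → α}
    (hgf : Function.LeftInverse g f) {l : List β} {l₀ : List α} (h : l ~ l₀.map f) :
    l.map g ~ l₀ ∧ (l.map g).map f = l := by
  refine ⟨by simpa [map_map, hgf.comp_eq_id] using h.map g, ?_⟩
  conv_rhs => rw [← map_id l]
  rw [map_map]
  refine map_congr_left fun x hx => ?_
  obtain ⟨y, -, rfl⟩ := mem_map.1 (h.mem_iff.1 hx)
  simp [hgf y]

lemma perm_range'_of_ordConnected {L : List ℕ} (hnd : L.Nodup) (hne : L ≠ [])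
    (hc : {x | x ∈ L}.OrdConnected) : ∃ lo, L ~ range' lo L.length := by
  have hs : L.toFinset.Nonempty := toFinset_nonempty_iff L |>.2 hne
  set lo := L.toFinset.min' hs
  set hi := L.toFinset.max' hs
  have key : ∀ x, x ∈ L ↔ lo ≤ x ∧ x ≤ hi := fun x =>
    ⟨fun hx => ⟨Finset.min'_le _ _ (mem_toFinset.2 hx), Finset.le_max' _ _ (mem_toFinset.2 hx)⟩,
      fun h => hc.out (mem_toFinset.1 (Finset.min'_mem _ _))
        (mem_toFinset.1 (Finset.max'_mem _ _)) h⟩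
  have hlen : L.length = hi + 1 - lo := by
    rw [← toFinset_card_of_nodup hnd, ← Nat.card_Icc]
    congr 1
    ext x
    rw [mem_toFinset, key, Finset.mem_Icc]
  have hlohi : lo ≤ hi := ((key lo).1 (mem_toFinset.1 (Finset.min'_mem _ _))).2
  refine ⟨lo, (perm_ext_iff_of_nodup hnd nodup_range').2 fun x => ?_⟩
  rw [key, mem_range'_1]
  omega

def shiftAbove (a k x : ℕ) : ℕ := if x ≤ a then x else x + k

lemma shiftAbove_strictMono (a k : ℕ) : StrictMono (shiftAbove a k) := fun x y h => by
  unfold shiftAbove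
  split_ifs <;> omega

lemma shiftAbove_le_iff {a k x : ℕ} : shiftAbove a k x ≤ a ↔ x ≤ a := by
  unfold shiftAbove
  split_ifs <;> omega

lemma map_add_range'_one (a k : ℕ) : (range' 1 k).map (· + a) = range' (a + 1) k := by
  rw [← map_add_range']
  simp only [Nat.add_comm]

lemma range'_perm_map_add_append_map_shiftAbove {a k m : ℕ} (ha : a ≤ m) :
    range' 1 (k + m) ~ (range' 1 k).map (· + a) ++ (range' 1 m).map (shiftAbove a k) := by
  obtain ⟨n, rfl⟩ : ∃ n, m = a + n := ⟨m - a, by omega⟩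
  have hsplit : ∀ b c, range' 1 (b + c) = range' 1 b ++ range' (b + 1) c := fun b c => by
    rw [← range'_append, Nat.one_mul, Nat.add_comm 1 b]
  have hlow : (range' 1 a).map (shiftAbove a k) = range' 1 a := by
    conv_rhs => rw [← map_id (range' 1 a)]
    exact map_congr_left fun x hx => if_pos (by have := mem_range'_1.1 hx; omega)
  have hhigh : (range' (a + 1) n).map (shiftAbove a k) = range' (a + k + 1) n := by
    have := map_add_range' (a := k) (a + 1) n 1
    rw [show k + (a + 1) = a + k + 1 by omega] at this
    rw [← this]
    exact map_congr_left fun x hx => by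
      simp only [shiftAbove, if_neg (show ¬x ≤ a by have := mem_range'_1.1 hx; omega),
        Nat.add_comm]
  rw [map_add_range'_one, hsplit a n, map_append, hlow, hhigh,
    show k + (a + n) = (a + k) + n by omega, hsplit (a + k) n, hsplit a k, ← append_assoc]
  exact perm_append_comm.append_right _

lemma exists_perm_of_isRecordSeq_append {L R : List ℕ} {k m : ℕ} (hk : 1 ≤ k)
    (hL : L.length = k) (hperm : L ++ R ~ range' 1 (k + m))
    (hrec : IsRecordSeq (stackSort L ++ stackSort R)) :
    ∃ a ≤ m, L ~ (range' 1 k).map (· + a) ∧ R ~ (range' 1 m).map (shiftAbove a k) := by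
  have hnd := nodup_append.1 (hperm.nodup_iff.2 nodup_range')
  have hmem : ∀ x ∈ L, 1 ≤ x ∧ x < 1 + (k + m) := fun x hx =>
    mem_range'_1.1 (hperm.mem_iff.1 (mem_append_left R hx))
  -- no entry of `R` lies strictly between two entries of `L`
  have hconv : {x | x ∈ L}.OrdConnected := ⟨fun x hx y hy z ⟨hxz, hzy⟩ => by
    have := hmem x hx
    have := hmem y hy
    have hz : z ∈ L ++ R := hperm.mem_iff.2 (mem_range'_1.2 (by omega))
    rcases mem_append.1 hz with hzL | hzR
    · exact hzL
    · have := hnd.2.2 x hx z hzR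
      have := hnd.2.2 y hy z hzR
      exact absurd ⟨by omega, by omega⟩ <|
        not_lt_lt_of_isRecordSeq_append hrec ((stackSort_perm L).mem_iff.2 hx)
          ((stackSort_perm L).mem_iff.2 hy) ((stackSort_perm R).mem_iff.2 hzR)⟩
  obtain ⟨lo, hlo⟩ := perm_range'_of_ordConnected hnd.1 (ne_nil_of_length_pos (by omega)) hconv
  rw [hL] at hlo
  have hfirst := hmem lo (hlo.mem_iff.2 (mem_range'_1.2 (by omega)))
  have hlast := hmem (lo + k - 1) (hlo.mem_iff.2 (mem_range'_1.2 (by omega)))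
  have hLa : L ~ (range' 1 k).map (· + (lo - 1)) := by
    rwa [map_add_range'_one, Nat.sub_add_cancel hfirst.1]
  refine ⟨lo - 1, by omega, hLa, ?_⟩
  exact (perm_append_left_iff _).1 ((hLa.append_right R).symm.trans
    (hperm.trans (range'_perm_map_add_append_map_shiftAbove (by omega))))

lemma isRecordSeq_append_iff_of_perm {L R : List ℕ} {a k m : ℕ} (hk : 1 ≤ k)
    (hL : L ~ (range' 1 k).map (· + a)) (hR : R ~ (range' 1 m).map (shiftAbove a k)) :
    IsRecordSeq (stackSort L ++ stackSort R) ↔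
      IsRecordSeq (stackSort L) ∧ DivergesAt a (stackSort R) := by
  refine isRecordSeq_append_iff (c := a + k) ?_ (fun x hx => ?_) (fun y hy => ?_)
  · rw [← length_pos_iff, (stackSort_perm L).length_eq, hL.length_eq, length_map, length_range']
    omega
  · obtain ⟨z, hz, rfl⟩ := mem_map.1 (hL.mem_iff.1 ((stackSort_perm L).mem_iff.1 hx))
    have := mem_range'_1.1 hz
    omega
  · obtain ⟨z, hz, rfl⟩ := mem_map.1 (hR.mem_iff.1 ((stackSort_perm R).mem_iff.1 hy))
    have := mem_range'_1.1 hz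
    unfold shiftAbove
    split_ifs <;> omega

lemma isRecordSeq_stackSort_append_iff {L R : List ℕ} {k m : ℕ} (hk : 1 ≤ k) :
    (L.length = k ∧ L ++ R ~ range' 1 (k + m) ∧ IsRecordSeq (stackSort L ++ stackSort R)) ↔
      ∃ a ≤ m, ∃ L' ∈ recordPreimages k, ∃ R' ∈ divergingPreimages m a,
        L = L'.map (· + a) ∧ R = R'.map (shiftAbove a k) := by
  constructor
  · rintro ⟨hL, hperm, hrec⟩
    obtain ⟨a, ham, hLa, hRa⟩ := exists_perm_of_isRecordSeq_append hk hL hperm hrec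
    obtain ⟨hL', hL'eq⟩ := hLa.map_of_leftInverse (g := (· - a)) fun x => Nat.add_sub_cancel x a
    obtain ⟨hR', hR'eq⟩ := hRa.map_of_leftInverse (g := fun x => if x ≤ a then x else x - k)
      fun x => by dsimp only [shiftAbove]; split_ifs <;> omega
    rw [isRecordSeq_append_iff_of_perm hk hLa hRa, ← hL'eq, ← hR'eq,
      stackSort_map add_left_strictMono, stackSort_map (shiftAbove_strictMono a k),
      isRecordSeq_map_iff add_left_strictMono,
      divergesAt_map_iff (shiftAbove_strictMono a k) fun _ => shiftAbove_le_iff] at hrec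
    exact ⟨a, ham, _, mem_recordPreimages.2 ⟨hL', hrec.1⟩, _,
      mem_divergingPreimages.2 ⟨hR', hrec.2⟩, hL'eq.symm, hR'eq.symm⟩
  · rintro ⟨a, ham, L', hL', R', hR', rfl, rfl⟩
    rw [mem_recordPreimages] at hL'
    rw [mem_divergingPreimages] at hR'
    have hLa := hL'.1.map (· + a)
    have hRa := hR'.1.map (shiftAbove a k)
    refine ⟨by simp [hL'.1.length_eq], (hLa.append hRa).trans
      (range'_perm_map_add_append_map_shiftAbove ham).symm, ?_⟩
    rw [isRecordSeq_append_iff_of_perm hk hLa hRa, stackSort_map add_left_strictMono,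
      stackSort_map (shiftAbove_strictMono a k), isRecordSeq_map_iff add_left_strictMono,
      divergesAt_map_iff (shiftAbove_strictMono a k) fun _ => shiftAbove_le_iff]
    exact ⟨hL'.2, hR'.2⟩

/-- `assemble n k ⟨a, L, R⟩ = L' n R'`, where `L'` is `L` moved onto the values `(a, a + k]`
and `R'` is `R` with its values above `a` raised by `k`. -/
def assemble (n k : ℕ) (t : Σ _ : ℕ, List ℕ × List ℕ) : List ℕ :=
  t.2.1.map (· + t.1) ++ n :: t.2.2.map (shiftAbove t.1 k)

lemma assemble_injOn {k m : ℕ} (hk : 1 ≤ k) :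
    Set.InjOn (assemble (k + m + 1) k)
      ((Finset.range (m + 1)).sigma fun a => recordPreimages k ×ˢ divergingPreimages m a) := by
  rintro ⟨a, L, R⟩ ht ⟨b, L', R'⟩ ht' heq
  simp only [Finset.coe_sigma, Set.mem_sigma_iff, Finset.coe_product, Set.mem_prod,
    Finset.mem_coe, mem_recordPreimages, mem_divergingPreimages] at ht ht'
  simp only [assemble] at heq
  obtain ⟨hL, hR⟩ := append_inj heq (by simp [ht.2.1.1.length_eq, ht'.2.1.1.length_eq])
  -- `a + 1` is the least entry of the left block
  have hmin : ∀ {a L}, L ~ range' 1 k → a + 1 ∈ L.map (· + a) ∧ ∀ x ∈ L.map (· + a), a + 1 ≤ x :=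
    fun {a L} h => by
      refine ⟨mem_map.2 ⟨1, h.mem_iff.2 (mem_range'_1.2 (by omega)), Nat.add_comm 1 a⟩, ?_⟩
      intro y hy
      obtain ⟨x, hx, rfl⟩ := mem_map.1 hy
      have := mem_range'_1.1 (h.mem_iff.1 hx)
      omega
  have hab : a = b := by
    have h1 := (hmin ht.2.1.1).2 _ (hL ▸ (hmin ht'.2.1.1).1)
    have h2 := (hmin ht'.2.1.1).2 _ (hL.symm ▸ (hmin ht.2.1.1).1)
    omega
  subst hab
  rw [map_injective_iff.2 (add_left_injective a) hL,
    map_injective_iff.2 (shiftAbove_strictMono a k).injective (cons_injective hR)]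

lemma filter_idxOf_eq_image_assemble {k m : ℕ} (hk : 1 ≤ k) :
    (recordPreimages (k + m + 1)).filter (·.idxOf (k + m + 1) = k) =
      ((Finset.range (m + 1)).sigma fun a => recordPreimages k ×ˢ divergingPreimages m a).image
        (assemble (k + m + 1) k) := by
  ext p
  rw [mem_filter_idxOf_iff, Finset.mem_image]
  constructor
  · rintro ⟨L, R, hL, rfl, hperm, hrec⟩
    obtain ⟨a, ham, L', hL', R', hR', rfl, rfl⟩ :=
      (isRecordSeq_stackSort_append_iff hk).1 ⟨hL, hperm, hrec⟩
    exact ⟨⟨a, L', R'⟩, Finset.mem_sigma.2 ⟨Finset.mem_range.2 (Nat.lt_succ_of_le ham),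
      Finset.mem_product.2 ⟨hL', hR'⟩⟩, rfl⟩
  · rintro ⟨⟨a, L', R'⟩, ht, rfl⟩
    simp only [Finset.mem_sigma, Finset.mem_range, Finset.mem_product] at ht
    obtain ⟨hL, hperm, hrec⟩ :=
      (isRecordSeq_stackSort_append_iff hk).2
        ⟨a, Nat.lt_succ_iff.1 ht.1, L', ht.2.1, R', ht.2.2, rfl, rfl⟩
    exact ⟨_, _, hL, rfl, hperm, hrec⟩

lemma card_filter_idxOf_eq_of_pos {k m : ℕ} (hk : 1 ≤ k) (hm : 1 ≤ m) :
    ((recordPreimages (k + m + 1)).filter (·.idxOf (k + m + 1) = k)).card =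
      (recordPreimages k).card * (2 * (recordPreimages m).card) := by
  rw [filter_idxOf_eq_image_assemble hk, Finset.card_image_of_injOn (assemble_injOn hk),
    Finset.card_sigma]
  simp_rw [Finset.card_product]
  rw [← Finset.mul_sum, sum_card_divergingPreimages hm]

lemma card_recordPreimages_succ {N : ℕ} (hN : 1 ≤ N) :
    (recordPreimages (N + 1)).card = 2 * (recordPreimages N).card +
      2 * ∑ k ∈ Finset.Ico 1 N, (recordPreimages k).card * (recordPreimages (N - k)).card := by
  have hmaps : Set.MapsTo (fun p : List ℕ => p.idxOf (N + 1)) ↑(recordPreimages (N + 1))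
      ↑(Finset.range (N + 1)) :=
    fun p hp => by
      have hp := (mem_recordPreimages.1 hp).1
      simpa [hp.length_eq] using idxOf_lt_length_of_mem (hp.mem_iff.2 (mem_range'_1.2 (by omega)))
  have hsplit : Finset.range (N + 1) = insert 0 (insert N (Finset.Ico 1 N)) := by
    ext k
    simp only [Finset.mem_range, Finset.mem_insert, Finset.mem_Ico]
    omega
  rw [Finset.card_eq_sum_card_fiberwise hmaps, hsplit,
    Finset.sum_insert (by simp only [Finset.mem_insert, Finset.mem_Ico]; omega),
    Finset.sum_insert (by simp), card_filter_idxOf_eq_zero, card_filter_idxOf_eq_last,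
    Finset.mul_sum, ← add_assoc, ← two_mul]
  refine congrArg _ (Finset.sum_congr rfl fun k hk => ?_)
  rw [Finset.mem_Ico] at hk
  obtain ⟨m, rfl⟩ : ∃ m, N = k + m := ⟨N - k, by omega⟩
  rw [card_filter_idxOf_eq_of_pos hk.1 (by omega), Nat.add_sub_cancel_left]
  ring

/-- `b 1 = 1` and for every `n ≥ 2`,
`b n = 2 b_{n-1} + 2 ∑_{i=2}^{n-1} b_{i-1} b_{n-i}`. -/
theorem preimage_av132_312_recurrence :
    b 1 = 1 ∧
      ∀ n : ℕ, 2 ≤ n →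
        b n = 2 * b (n - 1) + 2 * ∑ i ∈ Finset.Icc 2 (n - 1), b (i - 1) * b (n - i) := by
  refine ⟨(b_eq_card one_ne_zero).trans card_recordPreimages_one, fun n hn => ?_⟩
  obtain ⟨N, rfl⟩ : ∃ N, n = N + 1 := ⟨n - 1, by omega⟩
  rw [b_eq_card (by omega), card_recordPreimages_succ (by omega), Nat.add_sub_cancel,
    b_eq_card (by omega)]
  refine congrArg _ (congrArg _ (Finset.sum_nbij' (· + 1) (· - 1) ?_ ?_ ?_ ?_ ?_)) <;>
    intro k hk <;> simp only [Finset.mem_Ico, Finset.mem_Icc] at hk ⊢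
  · omega
  · omega
  · omega
  · omega
  · rw [Nat.add_sub_cancel, Nat.add_sub_add_right, b_eq_card (by omega), b_eq_card (by omega)]
end

section
/- Let n ≥ 2 and let p' be a permutation of {1, 2, …, n−1} such that s(p') avoids both 231 and 312. Then the two permutations of length n obtained by prepending the entry n to p' and by appending the entry n to p' both have the property that their stack-sorted image avoids 231 and 312; moreover, distinct choices of p' and of prepend/append give distinct permutations, so this construction contributes exactly 2·|s^{-1}(Av_{n-1}(231,312))| permutations of length n whose stack-sorted image avoids 231 and 312 and in which n is the first or last entry. -/
/-!
Since `n` is the largest entry, `s(n p') = s(p' n) = s(p') n`. In both `231` and `312` the last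
entry is not the largest one, so no occurrence in `s(p') n` can end at the final `n`: appending `n`
neither creates nor destroys these patterns. For `n ≥ 2` the list `p'` is nonempty and avoids `n`,
so `n p'` never equals `p'' n`, and every permutation beginning or ending with `n` arises in exactly
one way.
-/

theorem stackSortAux_nil (fuel : ℕ) : stackSortAux fuel [] = [] := by
  cases fuel <;> rfl

theorem stackSortAux_subset (fuel : ℕ) (l : List ℕ) : stackSortAux fuel l ⊆ l := by
  induction fuel generalizing l with
  | zero => simp [stackSortAux]
  | succ fuel ih =>
    match l with
    | [] => simp [stackSortAux]
    | a :: t =>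
      rw [stackSortAux]
      refine List.append_subset.2 ⟨List.append_subset.2 ⟨?_, ?_⟩, ?_⟩
      · exact List.Subset.trans (ih _) (List.takeWhile_prefix _).subset
      · exact List.Subset.trans (ih _) <|
          List.Subset.trans (List.tail_sublist _).subset (List.dropWhile_suffix _).subset
      · simpa using List.maximum_mem (List.foldr_max_of_ne_nil (List.cons_ne_nil a t)).symm

theorem stackSort_subset (l : List ℕ) : stackSort l ⊆ l :=
  stackSortAux_subset _ _

theorem stackSortAux_succ_append_cons {L R : List ℕ} {m : ℕ} (hL : ∀ x ∈ L, x < m)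
    (hR : ∀ x ∈ R, x ≤ m) (fuel : ℕ) :
    stackSortAux (fuel + 1) (L ++ m :: R) =
      stackSortAux fuel L ++ stackSortAux fuel R ++ [m] := by
  have hmax : (L ++ m :: R).foldr max 0 = m := by
    refine le_antisymm (List.max_le_of_forall_le _ _ fun x hx => ?_)
      (List.le_max_of_le (by simp) le_rfl)
    simp only [List.mem_append, List.mem_cons] at hx
    rcases hx with hx | rfl | hx
    exacts [(hL x hx).le, le_rfl, hR x hx]
  have hne : ∀ x ∈ L, decide (x ≠ m) = true := fun x hx => by simpa using (hL x hx).ne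
  obtain ⟨a, t, hat⟩ := List.exists_cons_of_ne_nil (List.append_ne_nil_of_right_ne_nil L
    (List.cons_ne_nil m R))
  rw [hat, stackSortAux, ← hat, hmax, List.takeWhile_append_of_pos hne,
    List.dropWhile_append_of_pos hne]
  simp

theorem stackSort_cons_of_forall_lt {p : List ℕ} {m : ℕ} (hp : ∀ x ∈ p, x < m) :
    stackSort (m :: p) = stackSort p ++ [m] := by
  simpa [stackSort, stackSortAux_nil] using
    stackSortAux_succ_append_cons (L := []) (by simp) (fun x hx => (hp x hx).le) p.length

theorem stackSort_append_of_forall_lt {p : List ℕ} {m : ℕ} (hp : ∀ x ∈ p, x < m) :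
    stackSort (p ++ [m]) = stackSort p ++ [m] := by
  simpa [stackSortAux_nil, stackSort] using
    stackSortAux_succ_append_cons (R := []) hp (by simp) p.length

theorem ContainsPat.append_right {p q : List ℕ} (h : ContainsPat p q) (u : List ℕ) :
    ContainsPat (p ++ u) q := by
  obtain ⟨f, hf, hiff⟩ := h
  refine ⟨fun i => Fin.castLE (by simp) (f i), fun i j hij => hf hij, fun i j => ?_⟩
  rw [hiff]
  simp [List.getElem_append_left]

theorem ContainsPat.of_append_max {p q : List ℕ} {a b m : ℕ} (ha : a ∈ q) (hba : b ≤ a)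
    (hp : ∀ x ∈ p, x < m) (h : ContainsPat (p ++ [m]) (q ++ [b])) :
    ContainsPat p (q ++ [b]) := by
  obtain ⟨f, hf, hiff⟩ := h
  let last : Fin (q ++ [b]).length := ⟨q.length, by simp⟩
  by_cases hlast : (f last).val < p.length
  · have hlt (i : Fin (q ++ [b]).length) : (f i).val < p.length := by
      refine lt_of_le_of_lt (hf.monotone (Fin.mk_le_mk.2 ?_)) hlast
      have := i.isLt; simp only [List.length_append, List.length_singleton] at this; omega
    refine ⟨fun i => ⟨f i, hlt i⟩, fun i j hij => hf hij, fun i j => ?_⟩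
    rw [hiff]
    simp [List.getElem_append_left (hlt i), List.getElem_append_left (hlt j)]
  · -- the occurrence ends at `m`, above the entry matched to `a`, although `b ≤ a`
    exfalso
    have hfl : (f last).val = p.length := by
      have := (f last).isLt; simp only [List.length_append, List.length_singleton] at this; omega
    obtain ⟨i, hi, rfl⟩ := List.mem_iff_getElem.1 ha
    let ia : Fin (q ++ [b]).length :=
      ⟨i, by simp only [List.length_append, List.length_singleton]; omega⟩
    have hia : (f ia).val < p.length := hfl ▸ hf (Fin.mk_lt_mk.2 hi : ia < last)
    have hb : (q ++ [b]).get ia < (q ++ [b]).get last := by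
      rw [hiff]
      simpa [List.getElem_append_left hia, hfl] using hp _ (List.getElem_mem hia)
    simp only [List.get_eq_getElem, ia, last, List.getElem_append_left hi,
      List.getElem_concat_length] at hb
    omega

theorem avoidsPat_append_max_iff {p q : List ℕ} {a b m : ℕ} (ha : a ∈ q) (hba : b ≤ a)
    (hp : ∀ x ∈ p, x < m) :
    AvoidsPat (p ++ [m]) (q ++ [b]) ↔ AvoidsPat p (q ++ [b]) :=
  not_congr ⟨ContainsPat.of_append_max ha hba hp, fun h => h.append_right _⟩

section IsPermList

variable {k : ℕ} {p : List ℕ}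

theorem IsPermList.lt_succ (h : IsPermList k p) {x : ℕ} (hx : x ∈ p) : x < k + 1 := by
  have := h.mem_iff.1 hx
  simp only [List.mem_map, List.mem_range] at this
  omega

theorem IsPermList.length_eq (h : IsPermList k p) : p.length = k := by
  simpa using List.Perm.length_eq h

theorem isPermList_succ_cons_iff : IsPermList (k + 1) ((k + 1) :: p) ↔ IsPermList k p := by
  rw [IsPermList, IsPermList, List.range_succ, List.map_append]
  have hlast := List.perm_append_singleton (k + 1) ((List.range k).map (· + 1))
  exact ⟨fun h => (List.perm_cons _).1 (h.trans hlast),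
    fun h => ((List.perm_cons _).2 h).trans hlast.symm⟩

theorem isPermList_succ_append_iff : IsPermList (k + 1) (p ++ [k + 1]) ↔ IsPermList k p := by
  rw [IsPermList, IsPermList, List.range_succ, List.map_append]
  exact List.perm_append_right_iff _

theorem IsPermList.succ_cons_ne_append (hk : 1 ≤ k) (h : IsPermList k p) (p' : List ℕ) :
    (k + 1) :: p' ≠ p ++ [k + 1] := by
  obtain ⟨a, t, rfl⟩ := List.exists_cons_of_ne_nil (List.ne_nil_of_length_pos (h.length_eq ▸ hk))
  intro heq
  have hmem : k + 1 ∈ a :: t := by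
    rw [(List.cons.inj heq).1]
    exact List.mem_cons_self
  exact lt_irrefl _ (h.lt_succ hmem)

end IsPermList

theorem card_isPermList_succ_max_first_or_last {k : ℕ} (hk : 1 ≤ k) (P : List ℕ → Prop)
    (hcons : ∀ p, IsPermList k p → (P ((k + 1) :: p) ↔ P p))
    (happend : ∀ p, IsPermList k p → (P (p ++ [k + 1]) ↔ P p)) :
    Nat.card {p : List ℕ // IsPermList (k + 1) p ∧ P p ∧
        (p.head? = some (k + 1) ∨ p.getLast? = some (k + 1))} =
      2 * Nat.card {p : List ℕ // IsPermList k p ∧ P p} := by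
  suffices Nat.card (Bool × {p : List ℕ // IsPermList k p ∧ P p}) =
      Nat.card {p : List ℕ // IsPermList (k + 1) p ∧ P p ∧
        (p.head? = some (k + 1) ∨ p.getLast? = some (k + 1))} by
    rw [← this, Nat.card_prod, Nat.card_eq_fintype_card (α := Bool), Fintype.card_bool]
  refine Nat.card_eq_of_bijective (fun
    | (true, ⟨p, hp⟩) =>
      ⟨(k + 1) :: p, isPermList_succ_cons_iff.2 hp.1, (hcons p hp.1).2 hp.2, .inl rfl⟩
    | (false, ⟨p, hp⟩) =>
      ⟨p ++ [k + 1], isPermList_succ_append_iff.2 hp.1, (happend p hp.1).2 hp.2, .inr (by simp)⟩)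
    ⟨?_, ?_⟩
  · rintro ⟨_ | _, p₁, hp₁⟩ ⟨_ | _, p₂, hp₂⟩ h <;> simp only [Subtype.mk.injEq] at h
    · obtain rfl : p₁ = p₂ := List.append_cancel_right h
      rfl
    · exact absurd h.symm (hp₁.1.succ_cons_ne_append hk p₂)
    · exact absurd h (hp₂.1.succ_cons_ne_append hk p₁)
    · obtain rfl : p₁ = p₂ := (List.cons.inj h).2
      rfl
  · rintro ⟨p, hp, hP, hfirst | hlast⟩
    · obtain ⟨t, rfl⟩ : ∃ t, p = (k + 1) :: t := by
        cases p <;> simp_all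
      have ht := isPermList_succ_cons_iff.1 hp
      exact ⟨(true, ⟨t, ht, (hcons t ht).1 hP⟩), rfl⟩
    · obtain ⟨t, rfl⟩ := List.getLast?_eq_some_iff.1 hlast
      have ht := isPermList_succ_append_iff.1 hp
      exact ⟨(false, ⟨t, ht, (happend t ht).1 hP⟩), rfl⟩

theorem avoids231_312_append_max_iff {t : List ℕ} {m : ℕ} (ht : ∀ x ∈ t, x < m) :
    (AvoidsPat (t ++ [m]) [2, 3, 1] ∧ AvoidsPat (t ++ [m]) [3, 1, 2]) ↔
      (AvoidsPat t [2, 3, 1] ∧ AvoidsPat t [3, 1, 2]) :=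
  and_congr (avoidsPat_append_max_iff (q := [2, 3]) (a := 2) (by simp) (by norm_num) ht)
    (avoidsPat_append_max_iff (q := [3, 1]) (a := 3) (by simp) (by norm_num) ht)

theorem avoids231_312_stackSort_cons_iff {p : List ℕ} {m : ℕ} (hp : ∀ x ∈ p, x < m) :
    (AvoidsPat (stackSort (m :: p)) [2, 3, 1] ∧ AvoidsPat (stackSort (m :: p)) [3, 1, 2]) ↔
      (AvoidsPat (stackSort p) [2, 3, 1] ∧ AvoidsPat (stackSort p) [3, 1, 2]) := by
  rw [stackSort_cons_of_forall_lt hp]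
  exact avoids231_312_append_max_iff fun x hx => hp x (stackSort_subset p hx)

theorem avoids231_312_stackSort_append_iff {p : List ℕ} {m : ℕ} (hp : ∀ x ∈ p, x < m) :
    (AvoidsPat (stackSort (p ++ [m])) [2, 3, 1] ∧
        AvoidsPat (stackSort (p ++ [m])) [3, 1, 2]) ↔
      (AvoidsPat (stackSort p) [2, 3, 1] ∧ AvoidsPat (stackSort p) [3, 1, 2]) := by
  rw [stackSort_append_of_forall_lt hp]
  exact avoids231_312_append_max_iff fun x hx => hp x (stackSort_subset p hx)

/-- let `n ≥ 2` and let `p'` be a permutation of `{1, …, n-1}`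
with `s(p')` avoiding both `231` and `312`. Then prepending and appending the
entry `n` to `p'` both yield permutations whose stack-sorted image avoids `231`
and `312`; distinct choices of `p'` and of prepend/append give distinct
permutations, and this construction contributes exactly
`2·|s⁻¹(Av_{n-1}(231, 312))|` permutations of length `n` whose stack-sorted
image avoids `231` and `312` and in which `n` is the first or last entry. -/
theorem prepend_append_av231_312 (n : ℕ) (hn : 2 ≤ n) :
    (∀ p' : List ℕ, IsPermList (n - 1) p' →
      AvoidsPat (stackSort p') [2,3,1] → AvoidsPat (stackSort p') [3, 1, 2] →
        (AvoidsPat (stackSort (n :: p')) [2,3,1] ∧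
          AvoidsPat (stackSort (n :: p')) [3, 1, 2]) ∧
        (AvoidsPat (stackSort (p' ++ [n])) [2,3,1] ∧
          AvoidsPat (stackSort (p' ++ [n])) [3, 1, 2])) ∧
    (∀ p₁ p₂ : List ℕ, IsPermList (n - 1) p₁ → IsPermList (n - 1) p₂ →
      n :: p₁ ≠ p₂ ++ [n]) ∧
    Nat.card {p : List ℕ // IsPermList n p ∧
        AvoidsPat (stackSort p) [2,3,1] ∧ AvoidsPat (stackSort p) [3, 1, 2] ∧
        (p.head? = some n ∨ p.getLast? = some n)} =
      2 * Nat.card {p' : List ℕ // IsPermList (n - 1) p' ∧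
        AvoidsPat (stackSort p') [2,3,1] ∧ AvoidsPat (stackSort p') [3, 1, 2]} := by
  obtain ⟨k, rfl⟩ : ∃ k, n = k + 1 := ⟨n - 1, by omega⟩
  have hk : 1 ≤ k := by omega
  rw [Nat.add_sub_cancel]
  have hcons (p : List ℕ) (hp : IsPermList k p) :=
    avoids231_312_stackSort_cons_iff fun _ hx => hp.lt_succ hx
  have happend (p : List ℕ) (hp : IsPermList k p) :=
    avoids231_312_stackSort_append_iff fun _ hx => hp.lt_succ hx
  refine ⟨fun p hp h₁ h₂ => ⟨(hcons p hp).2 ⟨h₁, h₂⟩, (happend p hp).2 ⟨h₁, h₂⟩⟩,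
    fun p₁ p₂ _ hp₂ => hp₂.succ_cons_ne_append hk p₁, ?_⟩
  simpa only [and_assoc] using card_isPermList_succ_max_first_or_last hk
    (fun p => AvoidsPat (stackSort p) [2, 3, 1] ∧ AvoidsPat (stackSort p) [3, 1, 2])
    hcons happend
end
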